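/- arXiv:2105.09072 — 4 statements merged into one kernel-verified Lean document; each statement's English description precedes it below -/
import Mathlib

section
/- Let F be a free group with lower central series Γ_1 ⊇ Γ_2 ⊇ ⋯. For an endomorphism f of F and elements x, y of F, define [f,x] := f(x)x⁻¹. If x ∈ Γ_{k-1} and y ∈ F and [f,z] ∈ Γ_{k-1+r} for all z ∈ Γ_{k-1} and [f,w] ∈ Γ_{r+1} for all w ∈ F, then [f,[x,y]] ∈ Γ_{k+r}, where [x,y] = xyx⁻¹y⁻¹ is the group commutator. -/
/-!
Write `a = [f,x]` and `b = [f,y]`, so that `f [x,y] = [a x, b y]`. Modulo `Γ_{k+r}` the element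
`a ∈ Γ_{k-1+r}` is central, while `b ∈ Γ_{r+1}` commutes with `x ∈ Γ_{k-1}` and with
`[x,y] ∈ Γ_k` because `[Γ_i, Γ_j] ≤ Γ_{i+j}` (three subgroups lemma). In any group these three
commutation relations force `[a x, b y] = [x, y]`.
-/

/-- `Gam G k` is the `k`-th term `Γ_k` of the lower central series of `G`
(with the convention `Γ_1 = G`). -/
abbrev Gam (G : Type*) [Group G] (k : ℕ) : Subgroup G := (⊤ : Subgroup G).lowerCentralSeries (k - 1)

open scoped commutatorElement

namespace Subgroup

variable {G : Type*} [Group G]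

theorem commutator_le_iff_map_mk_eq_bot (H K N : Subgroup G) [N.Normal] :
    ⁅H, K⁆ ≤ N ↔ ⁅H.map (QuotientGroup.mk' N), K.map (QuotientGroup.mk' N)⁆ = ⊥ := by
  rw [← map_commutator, map_eq_bot_iff, QuotientGroup.ker_mk']

theorem commutator_commutator_le_of_rotate {H₁ H₂ H₃ N : Subgroup G} [N.Normal]
    (h1 : ⁅⁅H₂, H₃⁆, H₁⁆ ≤ N) (h2 : ⁅⁅H₃, H₁⁆, H₂⁆ ≤ N) : ⁅⁅H₁, H₂⁆, H₃⁆ ≤ N := by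
  simp only [commutator_le_iff_map_mk_eq_bot, map_commutator] at h1 h2 ⊢
  exact commutator_commutator_eq_bot_of_rotate h1 h2

theorem commutator_lowerCentralSeries_le (m n : ℕ) :
    ⁅(⊤ : Subgroup G).lowerCentralSeries m, (⊤ : Subgroup G).lowerCentralSeries n⁆ ≤
      (⊤ : Subgroup G).lowerCentralSeries (m + n + 1) := by
  induction n generalizing m with
  | zero => exact le_rfl
  | succ n ih =>
    rw [commutator_comm, lowerCentralSeries_succ]
    apply commutator_commutator_le_of_rotate
    · rw [commutator_comm ⊤, ← lowerCentralSeries_succ]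
      exact (ih (m + 1)).trans_eq (by rw [Nat.add_right_comm m 1 n, Nat.add_assoc m n])
    · calc ⁅⁅(⊤ : Subgroup G).lowerCentralSeries m, (⊤ : Subgroup G).lowerCentralSeries n⁆, ⊤⁆
          ≤ ⁅(⊤ : Subgroup G).lowerCentralSeries (m + n + 1), ⊤⁆ := commutator_mono (ih m) le_rfl
        _ = (⊤ : Subgroup G).lowerCentralSeries (m + (n + 1) + 1) := by
          rw [← lowerCentralSeries_succ, Nat.add_assoc m n]

end Subgroup

theorem commutatorElement_mul_mul_eq {Q : Type*} [Group Q] {a b x y : Q}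
    (ha : a ∈ Subgroup.center Q) (hbx : Commute b x) (hbxy : Commute b ⁅x, y⁆) :
    ⁅a * x, b * y⁆ = ⁅x, y⁆ := by
  have hconj : a * (x * b * y * x⁻¹) * a⁻¹ = x * b * y * x⁻¹ := by
    rw [← Subgroup.mem_center_iff.mp ha, mul_inv_cancel_right]
  calc ⁅a * x, b * y⁆ = a * (x * b * y * x⁻¹) * a⁻¹ * (b * y)⁻¹ := by group
    _ = b * ⁅x, y⁆ * b⁻¹ := by rw [hconj, ← hbx.eq]; group
    _ = ⁅x, y⁆ := by rw [hbxy.eq, mul_inv_cancel_right]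

theorem QuotientGroup.commute_mk_of_commutatorElement_mem {G : Type*} [Group G] {N : Subgroup G}
    [N.Normal] {g h : G} (hgh : ⁅g, h⁆ ∈ N) : Commute (g : G ⧸ N) h := by
  rw [← commutatorElement_eq_one_iff_commute, ← QuotientGroup.mk'_apply, ← QuotientGroup.mk'_apply,
    ← map_commutatorElement, QuotientGroup.mk'_apply, QuotientGroup.eq_one_iff]
  exact hgh

theorem map_commutatorElement_mul_inv_mem_lowerCentralSeries {G : Type*} [Group G] (f : G →* G)
    {m r : ℕ} {x y : G} (hx : x ∈ (⊤ : Subgroup G).lowerCentralSeries m)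
    (hfx : f x * x⁻¹ ∈ (⊤ : Subgroup G).lowerCentralSeries (m + r))
    (hfy : f y * y⁻¹ ∈ (⊤ : Subgroup G).lowerCentralSeries r) :
    f ⁅x, y⁆ * ⁅x, y⁆⁻¹ ∈ (⊤ : Subgroup G).lowerCentralSeries (m + r + 1) := by
  set N := (⊤ : Subgroup G).lowerCentralSeries (m + r + 1)
  set a := f x * x⁻¹
  set b := f y * y⁻¹
  have ha : (a : G ⧸ N) ∈ Subgroup.center (G ⧸ N) := by
    refine Subgroup.mem_center_iff.mpr (QuotientGroup.mk_surjective.forall.mpr fun g => ?_)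
    exact (QuotientGroup.commute_mk_of_commutatorElement_mem
      (Subgroup.commutator_mem_commutator hfx (Subgroup.mem_top g))).eq.symm
  have hbx : Commute (b : G ⧸ N) x := QuotientGroup.commute_mk_of_commutatorElement_mem <|
    (Subgroup.commutator_lowerCentralSeries_le r m).trans_eq (by rw [Nat.add_comm r m])
      (Subgroup.commutator_mem_commutator hfy hx)
  have hxy : ⁅x, y⁆ ∈ (⊤ : Subgroup G).lowerCentralSeries (m + 1) :=
    Subgroup.commutator_mem_commutator hx (Subgroup.mem_top y)
  have hbxy : Commute (b : G ⧸ N) (⁅x, y⁆ : G) :=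
    QuotientGroup.commute_mk_of_commutatorElement_mem <|
      ((Subgroup.commutator_lowerCentralSeries_le r (m + 1)).trans
        (Subgroup.lowerCentralSeries_antitone _ (by omega : m + r + 1 ≤ r + (m + 1) + 1)))
        (Subgroup.commutator_mem_commutator hfy hxy)
  have hf : f ⁅x, y⁆ = ⁅a * x, b * y⁆ := by
    rw [map_commutatorElement, inv_mul_cancel_right, inv_mul_cancel_right]
  rw [← QuotientGroup.eq_one_iff, QuotientGroup.mk_mul, QuotientGroup.mk_inv, mul_inv_eq_one, hf]
  simpa only [commutatorElement_def, QuotientGroup.mk_mul, QuotientGroup.mk_inv]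
    using commutatorElement_mul_mul_eq ha hbx hbxy

/-- If `x ∈ Γ_{k-1}`, `y ∈ F`, `[f,z] ∈ Γ_{k-1+r}` for all `z ∈ Γ_{k-1}` and
`[f,w] ∈ Γ_{r+1}` for all `w`, then `[f,[x,y]] ∈ Γ_{k+r}`, where `[f,x] = f(x)x⁻¹`. -/
theorem stmt0 (G : Type*) [Group G] (f : G →* G) (k r : ℕ) (hk : 2 ≤ k)
    (x y : G) (hx : x ∈ Gam G (k - 1))
    (hΓ : ∀ z ∈ Gam G (k - 1), f z * z⁻¹ ∈ Gam G (k - 1 + r))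
    (hF : ∀ w : G, f w * w⁻¹ ∈ Gam G (r + 1)) :
    f (x * y * x⁻¹ * y⁻¹) * (x * y * x⁻¹ * y⁻¹)⁻¹ ∈ Gam G (k + r) := by
  obtain ⟨m, rfl⟩ : ∃ m, k = m + 2 := ⟨k - 2, by omega⟩
  have hfx := hΓ x hx
  have hfy := hF y
  rw [show m + 2 - 1 + r = m + r + 1 by omega] at hfx
  rw [show m + 2 + r = m + r + 1 + 1 by omega]
  exact map_commutatorElement_mul_inv_mem_lowerCentralSeries f hx hfx hfy
end

section
/- Let F_n be a free group of rank n ≥ 1, H = F_n/Γ_2 its abelianization, and Lie_{r+1}(n) = Γ_{r+1}/Γ_{r+2}. The r-th Johnson homomorphism τ̃_r : 𝔈_r(n)/∼_{r+1} → Hom(H, Lie_{r+1}(n)), induced by f ↦ (xΓ_2 ↦ f(x)x⁻¹Γ_{r+2}), is a surjective group homomorphism; hence an isomorphism of abelian groups. -/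
namespace Johnson

open QuotientGroup

variable {G : Type*} [Group G]

theorem mk'_comp_eq_mk'_iff {M : Subgroup G} [M.Normal] {f : G →* G} :
    (mk' M).comp f = mk' M ↔ ∀ x, f x * x⁻¹ ∈ M := by
  simp only [MonoidHom.ext_iff, MonoidHom.comp_apply, mk'_apply, eq_iff_div_mem, div_eq_mul_inv]

theorem comp_mul_inv_mem {M : Subgroup G} {f g : G →* G} (hf : ∀ x, f x * x⁻¹ ∈ M)
    (hg : ∀ x, g x * x⁻¹ ∈ M) (x : G) : (f.comp g) x * x⁻¹ ∈ M := by
  simpa only [MonoidHom.comp_apply, mul_assoc, inv_mul_cancel_left] using mul_mem (hf (g x)) (hg x)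

variable {M N : Subgroup G} [N.Normal]

theorem mk_commute_of_commutator_le (hMN : ⁅M, ⊤⁆ ≤ N) {a : G} (ha : a ∈ M) (x : G) :
    Commute (a : G ⧸ N) (x : G ⧸ N) := by
  rw [commute_iff_eq, ← commutatorElement_eq_one_iff_mul_comm, ← mk'_apply, ← mk'_apply,
    ← map_commutatorElement, mk'_apply, eq_one_iff]
  exact hMN (Subgroup.commutator_mem_commutator ha (Subgroup.mem_top x))

def johnsonHom (hMN : ⁅M, ⊤⁆ ≤ N) (f : G →* G) (hf : ∀ x, f x * x⁻¹ ∈ M) : G →* G ⧸ N :=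
  MonoidHom.mk' (fun x => ((f x * x⁻¹ : G) : G ⧸ N)) fun x y => by
    have hexpand : f (x * y) * (x * y)⁻¹ = f x * x⁻¹ * (x * (f y * y⁻¹) * x⁻¹) := by
      rw [map_mul]; group
    have hconj : ((x * (f y * y⁻¹) * x⁻¹ : G) : G ⧸ N) = (f y * y⁻¹ : G) :=
      (mk_commute_of_commutator_le hMN (hf y) x).symm.mul_inv_cancel
    rw [hexpand, mk_mul, hconj]

variable (hMN : ⁅M, ⊤⁆ ≤ N) {f g : G →* G} (hf : ∀ x, f x * x⁻¹ ∈ M) (hg : ∀ x, g x * x⁻¹ ∈ M)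

@[simp]
theorem johnsonHom_apply (x : G) : johnsonHom hMN f hf x = ((f x * x⁻¹ : G) : G ⧸ N) := rfl

theorem commutator_le_ker_johnsonHom : commutator G ≤ (johnsonHom hMN f hf).ker := by
  rw [commutator_def, Subgroup.commutator_le]
  intro x _ y _
  rw [MonoidHom.mem_ker, map_commutatorElement, commutatorElement_eq_one_iff_mul_comm]
  exact mk_commute_of_commutator_le hMN (hf x) _

theorem johnsonHom_eq_of_inv_mul_mem_commutator {x y : G} (hxy : x⁻¹ * y ∈ commutator G) :
    johnsonHom hMN f hf x = johnsonHom hMN f hf y :=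
  ((johnsonHom hMN f hf).eq_iff.mpr (commutator_le_ker_johnsonHom hMN hf hxy)).symm

theorem johnsonHom_comp_apply (hM : M ≤ commutator G) (x : G) :
    johnsonHom hMN (f.comp g) (comp_mul_inv_mem hf hg) x =
      johnsonHom hMN f hf x * johnsonHom hMN g hg x := by
  have hgx : (g x)⁻¹ * x ∈ commutator G := by
    simpa using inv_mem ((Subgroup.Normal.mem_comm_iff inferInstance).mp (hM (hg x)))
  rw [← johnsonHom_eq_of_inv_mul_mem_commutator hMN hf hgx, johnsonHom_apply, johnsonHom_apply,
    johnsonHom_apply, ← mk_mul, mul_assoc, inv_mul_cancel_left, MonoidHom.comp_apply]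

theorem exists_johnsonHom_eq {α : Type*} {M N : Subgroup (FreeGroup α)} [M.Normal] [N.Normal]
    (hMN : ⁅M, ⊤⁆ ≤ N) (ψ : FreeGroup α →* FreeGroup α ⧸ N) (hψ : ∀ x, ψ x ∈ M.map (mk' N)) :
    ∃ (f : FreeGroup α →* FreeGroup α) (hf : ∀ x, f x * x⁻¹ ∈ M), johnsonHom hMN f hf = ψ := by
  choose t ht hψt using fun a => Subgroup.mem_map.mp (hψ (FreeGroup.of a))
  let f : FreeGroup α →* FreeGroup α := FreeGroup.lift fun a => t a * FreeGroup.of a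
  have hf_of (a : α) : f (FreeGroup.of a) * (FreeGroup.of a)⁻¹ = t a := by
    simp [f]
  have hf : ∀ x, f x * x⁻¹ ∈ M := mk'_comp_eq_mk'_iff.mp <| FreeGroup.ext_hom _ _ fun a =>
    eq_iff_div_mem.mpr (by rw [div_eq_mul_inv, hf_of]; exact ht a)
  exact ⟨f, hf, FreeGroup.ext_hom _ _ fun a => by rw [johnsonHom_apply, hf_of, ← hψt a]; rfl⟩

end Johnson

/-- `Hom(H, Lie_{r+1}(n))` is modelled as the homomorphisms `F_n/Γ_2 → F_n/Γ_{r+2}` with values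
in the image of `Γ_{r+1}`. -/
theorem stmt7_general (n r : ℕ) (hr : 1 ≤ r) :
    (∀ f : FreeGroup (Fin n) →* FreeGroup (Fin n),
      (∀ x, f x * x⁻¹ ∈ Gam (FreeGroup (Fin n)) (r + 1)) →
      ∀ x y : FreeGroup (Fin n), x⁻¹ * y ∈ Gam (FreeGroup (Fin n)) 2 →
        (QuotientGroup.mk (f x * x⁻¹) :
            FreeGroup (Fin n) ⧸ Gam (FreeGroup (Fin n)) (r + 2)) =
          QuotientGroup.mk (f y * y⁻¹)) ∧
    (∀ f : FreeGroup (Fin n) →* FreeGroup (Fin n),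
      (∀ x, f x * x⁻¹ ∈ Gam (FreeGroup (Fin n)) (r + 1)) →
      ∀ x y : FreeGroup (Fin n),
        (QuotientGroup.mk (f (x * y) * (x * y)⁻¹) :
            FreeGroup (Fin n) ⧸ Gam (FreeGroup (Fin n)) (r + 2)) =
          QuotientGroup.mk (f x * x⁻¹) * QuotientGroup.mk (f y * y⁻¹)) ∧
    (∀ f g : FreeGroup (Fin n) →* FreeGroup (Fin n),
      (∀ x, f x * x⁻¹ ∈ Gam (FreeGroup (Fin n)) (r + 1)) →
      (∀ x, g x * x⁻¹ ∈ Gam (FreeGroup (Fin n)) (r + 1)) →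
      ∀ x : FreeGroup (Fin n),
        (QuotientGroup.mk (f (g x) * x⁻¹) :
            FreeGroup (Fin n) ⧸ Gam (FreeGroup (Fin n)) (r + 2)) =
          QuotientGroup.mk (f x * x⁻¹) * QuotientGroup.mk (g x * x⁻¹)) ∧
    (∀ φ : (FreeGroup (Fin n) ⧸ Gam (FreeGroup (Fin n)) 2) →*
        (FreeGroup (Fin n) ⧸ Gam (FreeGroup (Fin n)) (r + 2)),
      (∀ a, φ a ∈ (Gam (FreeGroup (Fin n)) (r + 1)).map
          (QuotientGroup.mk' (Gam (FreeGroup (Fin n)) (r + 2)))) →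
      ∃ f : FreeGroup (Fin n) →* FreeGroup (Fin n),
        (∀ x, f x * x⁻¹ ∈ Gam (FreeGroup (Fin n)) (r + 1)) ∧
        ∀ x : FreeGroup (Fin n),
          (QuotientGroup.mk (f x * x⁻¹) :
              FreeGroup (Fin n) ⧸ Gam (FreeGroup (Fin n)) (r + 2)) =
            φ (QuotientGroup.mk x)) := by
  have hMN : ⁅Gam (FreeGroup (Fin n)) (r + 1), ⊤⁆ ≤ Gam (FreeGroup (Fin n)) (r + 2) := le_rfl
  have hM : Gam (FreeGroup (Fin n)) (r + 1) ≤ commutator (FreeGroup (Fin n)) :=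
    (⊤ : Subgroup _).lowerCentralSeries_antitone hr
  refine ⟨fun f hf _ _ hxy => Johnson.johnsonHom_eq_of_inv_mul_mem_commutator hMN hf hxy,
    fun f hf => map_mul (Johnson.johnsonHom hMN f hf),
    fun f g hf hg => Johnson.johnsonHom_comp_apply hMN hf hg hM, fun φ hφ => ?_⟩
  obtain ⟨f, hf, hfφ⟩ :=
    Johnson.exists_johnsonHom_eq hMN (φ.comp (QuotientGroup.mk' _)) fun _ => hφ _
  exact ⟨f, hf, DFunLike.congr_fun hfφ⟩

/-- The `r`-th Johnson homomorphism of `End(F_n)`,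
`τ̃_r : 𝔈_r(n)/∼_{r+1} → Hom(H, Lie_{r+1}(n))`, `f ↦ (xΓ_2 ↦ f(x)x⁻¹Γ_{r+2})`,
is a well-defined surjective group homomorphism, hence an isomorphism of abelian groups.
Here `H = F_n/Γ_2`, and `Lie_{r+1}(n) = Γ_{r+1}/Γ_{r+2}` is identified with the image of
`Γ_{r+1}` in `F_n/Γ_{r+2}`.  The four clauses state that for `f ∈ 𝔈_r(n)`:
`f(x)x⁻¹ mod Γ_{r+2}` depends only on `x mod Γ_2`; the resulting map `H → Lie_{r+1}(n)`
is a group homomorphism; `τ̃_r` is multiplicative (a monoid homomorphism into the abelian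
group `Hom(H, Lie_{r+1}(n))`); and `τ̃_r` is surjective.  (Injectivity of `τ̃_r` holds by
the very definition of the equivalence relation `∼_{r+1}`.) -/
theorem stmt7 (n r : ℕ) (hn : 1 ≤ n) (hr : 1 ≤ r) :
    (∀ f : FreeGroup (Fin n) →* FreeGroup (Fin n),
      (∀ x, f x * x⁻¹ ∈ Gam (FreeGroup (Fin n)) (r + 1)) →
      ∀ x y : FreeGroup (Fin n), x⁻¹ * y ∈ Gam (FreeGroup (Fin n)) 2 →
        (QuotientGroup.mk (f x * x⁻¹) :
            FreeGroup (Fin n) ⧸ Gam (FreeGroup (Fin n)) (r + 2)) =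
          QuotientGroup.mk (f y * y⁻¹)) ∧
    (∀ f : FreeGroup (Fin n) →* FreeGroup (Fin n),
      (∀ x, f x * x⁻¹ ∈ Gam (FreeGroup (Fin n)) (r + 1)) →
      ∀ x y : FreeGroup (Fin n),
        (QuotientGroup.mk (f (x * y) * (x * y)⁻¹) :
            FreeGroup (Fin n) ⧸ Gam (FreeGroup (Fin n)) (r + 2)) =
          QuotientGroup.mk (f x * x⁻¹) * QuotientGroup.mk (f y * y⁻¹)) ∧
    (∀ f g : FreeGroup (Fin n) →* FreeGroup (Fin n),
      (∀ x, f x * x⁻¹ ∈ Gam (FreeGroup (Fin n)) (r + 1)) →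
      (∀ x, g x * x⁻¹ ∈ Gam (FreeGroup (Fin n)) (r + 1)) →
      ∀ x : FreeGroup (Fin n),
        (QuotientGroup.mk (f (g x) * x⁻¹) :
            FreeGroup (Fin n) ⧸ Gam (FreeGroup (Fin n)) (r + 2)) =
          QuotientGroup.mk (f x * x⁻¹) * QuotientGroup.mk (g x * x⁻¹)) ∧
    (∀ φ : (FreeGroup (Fin n) ⧸ Gam (FreeGroup (Fin n)) 2) →*
        (FreeGroup (Fin n) ⧸ Gam (FreeGroup (Fin n)) (r + 2)),
      (∀ a, φ a ∈ (Gam (FreeGroup (Fin n)) (r + 1)).map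
          (QuotientGroup.mk' (Gam (FreeGroup (Fin n)) (r + 2)))) →
      ∃ f : FreeGroup (Fin n) →* FreeGroup (Fin n),
        (∀ x, f x * x⁻¹ ∈ Gam (FreeGroup (Fin n)) (r + 1)) ∧
        ∀ x : FreeGroup (Fin n),
          (QuotientGroup.mk (f x * x⁻¹) :
              FreeGroup (Fin n) ⧸ Gam (FreeGroup (Fin n)) (r + 2)) =
            φ (QuotientGroup.mk x)) :=
  stmt7_general n r hr
end

section
/- Let F_n be a free group and suppose f is an endomorphism with f(x_i) = c_i · x_i for fixed elements c_i ∈ Γ_{r+1} on each generator x_i. Then for every x ∈ F_n, the class of f(x)x⁻¹ in Γ_{r+1}/Γ_{r+2} depends only on the image of x in H = F_n/Γ_2, and the map H → Γ_{r+1}/Γ_{r+2}, xΓ_2 ↦ f(x)x⁻¹Γ_{r+2}, is a group homomorphism. -/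
/-- The endomorphism of the free group determined by `f(x_i) = c_i · x_i`. -/
def fEnd (n : ℕ) (c : Fin n → FreeGroup (Fin n)) :
    FreeGroup (Fin n) →* FreeGroup (Fin n) :=
  FreeGroup.lift fun i => c i * FreeGroup.of i

/-!
If `f ≡ id` modulo a normal subgroup `N`, the displacement `x ↦ f(x)x⁻¹` satisfies
`f(xy)(xy)⁻¹ = f(x)x⁻¹ · x (f(y)y⁻¹) x⁻¹`, and conjugation by `x` is trivial on `N` modulo
`[N, G]`; so the displacement is a homomorphism into `N/[N, G]`. Its values there commute with
everything, hence it kills commutators and factors through `G/Γ_2`. For `f(x_i) = c_i x_i` with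
`c_i ∈ Γ_{r+1}` we take `N = Γ_{r+1}`, so that `[N, G] = Γ_{r+2}`.
-/

open scoped commutatorElement

theorem FreeGroup.lift_mul_of_apply_mul_inv_mem {α : Type*} {N : Subgroup (FreeGroup α)}
    [N.Normal] {c : α → FreeGroup α} (hc : ∀ i, c i ∈ N) (x : FreeGroup α) :
    lift (fun i => c i * of i) x * x⁻¹ ∈ N := by
  have hquot : (QuotientGroup.mk' N).comp (lift fun i => c i * of i) = QuotientGroup.mk' N :=
    ext_hom _ _ fun i => by simp [hc i]
  rw [← div_eq_mul_inv, ← QuotientGroup.eq_iff_div_mem]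
  exact DFunLike.congr_fun hquot x

section Displacement

variable {G : Type*} [Group G] (f : G →* G) (N : Subgroup G) [N.Normal]

theorem mk_displacement_mul (hf : ∀ x, f x * x⁻¹ ∈ N) (x y : G) :
    (QuotientGroup.mk (f (x * y) * (x * y)⁻¹) : G ⧸ ⁅N, (⊤ : Subgroup G)⁆) =
      QuotientGroup.mk (f x * x⁻¹) * QuotientGroup.mk (f y * y⁻¹) := by
  rw [← QuotientGroup.mk_mul, QuotientGroup.eq]
  have hcomm : (f (x * y) * (x * y)⁻¹)⁻¹ * (f x * x⁻¹ * (f y * y⁻¹)) =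
      ⁅(f y * y⁻¹)⁻¹, x⁆⁻¹ := by
    rw [map_mul, commutatorElement_def]; group
  rw [hcomm]
  exact inv_mem (Subgroup.commutator_mem_commutator (inv_mem (hf y)) (Subgroup.mem_top x))

def displacementHom (hf : ∀ x, f x * x⁻¹ ∈ N) : G →* G ⧸ ⁅N, (⊤ : Subgroup G)⁆ where
  toFun x := QuotientGroup.mk (f x * x⁻¹)
  map_one' := by simp
  map_mul' := mk_displacement_mul f N hf

theorem displacementHom_apply (hf : ∀ x, f x * x⁻¹ ∈ N) (x : G) :
    displacementHom f N hf x = QuotientGroup.mk (f x * x⁻¹) :=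
  rfl

theorem commutator_le_ker_displacementHom (hf : ∀ x, f x * x⁻¹ ∈ N) :
    commutator G ≤ (displacementHom f N hf).ker := by
  rw [commutator_def, Subgroup.commutator_le]
  intro g _ h _
  rw [MonoidHom.mem_ker, map_commutatorElement, displacementHom_apply, displacementHom_apply]
  have hmem : ⁅f g * g⁻¹, f h * h⁻¹⁆ ∈ ⁅N, (⊤ : Subgroup G)⁆ :=
    Subgroup.commutator_mem_commutator (hf g) (Subgroup.mem_top _)
  exact (map_commutatorElement (QuotientGroup.mk' _) _ _).symm.trans
    ((QuotientGroup.eq_one_iff _).mpr hmem)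

theorem displacementHom_eq_of_inv_mul_mem_commutator (hf : ∀ x, f x * x⁻¹ ∈ N) {x y : G}
    (hxy : x⁻¹ * y ∈ commutator G) :
    displacementHom f N hf x = displacementHom f N hf y := by
  have hker := commutator_le_ker_displacementHom f N hf hxy
  rwa [MonoidHom.mem_ker, map_mul, map_inv, inv_mul_eq_one] at hker

end Displacement

theorem stmt8_general (n r : ℕ) (c : Fin n → FreeGroup (Fin n))
    (hc : ∀ i, c i ∈ Gam (FreeGroup (Fin n)) (r + 1)) :
    (∀ x : FreeGroup (Fin n),
        fEnd n c x * x⁻¹ ∈ Gam (FreeGroup (Fin n)) (r + 1)) ∧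
    (∀ x y : FreeGroup (Fin n), x⁻¹ * y ∈ Gam (FreeGroup (Fin n)) 2 →
        (QuotientGroup.mk (fEnd n c x * x⁻¹) :
            FreeGroup (Fin n) ⧸ Gam (FreeGroup (Fin n)) (r + 2)) =
          QuotientGroup.mk (fEnd n c y * y⁻¹)) ∧
    (∀ x y : FreeGroup (Fin n),
        (QuotientGroup.mk (fEnd n c (x * y) * (x * y)⁻¹) :
            FreeGroup (Fin n) ⧸ Gam (FreeGroup (Fin n)) (r + 2)) =
          QuotientGroup.mk (fEnd n c x * x⁻¹) * QuotientGroup.mk (fEnd n c y * y⁻¹)) := by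
  have hf : ∀ x, fEnd n c x * x⁻¹ ∈ Gam (FreeGroup (Fin n)) (r + 1) :=
    FreeGroup.lift_mul_of_apply_mul_inv_mem hc
  exact ⟨hf, fun x y hxy => displacementHom_eq_of_inv_mul_mem_commutator _ _ hf hxy,
    mk_displacement_mul _ _ hf⟩

/-- If `f(x_i) = c_i x_i` with `c_i ∈ Γ_{r+1}`, then `f(x)x⁻¹ ∈ Γ_{r+1}` for every `x`,
the class of `f(x)x⁻¹` in `Γ_{r+1}/Γ_{r+2}` depends only on the image of `x` in
`H = F_n/Γ_2`, and the map `xΓ_2 ↦ f(x)x⁻¹ Γ_{r+2}` is a group homomorphism. -/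
theorem stmt8 (n r : ℕ) (hr : 1 ≤ r) (c : Fin n → FreeGroup (Fin n))
    (hc : ∀ i, c i ∈ Gam (FreeGroup (Fin n)) (r + 1)) :
    (∀ x : FreeGroup (Fin n),
        fEnd n c x * x⁻¹ ∈ Gam (FreeGroup (Fin n)) (r + 1)) ∧
    (∀ x y : FreeGroup (Fin n), x⁻¹ * y ∈ Gam (FreeGroup (Fin n)) 2 →
        (QuotientGroup.mk (fEnd n c x * x⁻¹) :
            FreeGroup (Fin n) ⧸ Gam (FreeGroup (Fin n)) (r + 2)) =
          QuotientGroup.mk (fEnd n c y * y⁻¹)) ∧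
    (∀ x y : FreeGroup (Fin n),
        (QuotientGroup.mk (fEnd n c (x * y) * (x * y)⁻¹) :
            FreeGroup (Fin n) ⧸ Gam (FreeGroup (Fin n)) (r + 2)) =
          QuotientGroup.mk (fEnd n c x * x⁻¹) * QuotientGroup.mk (fEnd n c y * y⁻¹)) :=
  stmt8_general n r c hc
end

section
/- Let d ≥ 2. Define the bipartite graph G_d with vertex set X_d ∪ Y_d, where X_d = {2λ : λ ⊢ d, λ ≠ (d)} (partitions of 2d with all parts even, other than (2d)) and Y_d = {μ ⊢ 2d−1 : μ has exactly 3 odd parts}, with an edge between 2λ and μ whenever μ is obtained from 2λ by removing one box from each of two different rows and adding one box to another row (yielding a valid partition). Then G_d is connected. -/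
/-- `X d`: partitions of `2d` with all parts even, other than the single-row
partition `(2d)` (i.e. partitions `2λ` for `λ ⊢ d`, `λ ≠ (d)`). -/
def Xv (d : ℕ) : Type :=
  {p : Nat.Partition (2 * d) // (∀ i ∈ p.parts, Even i) ∧ p.parts ≠ {2 * d}}

/-- `Y d`: partitions of `2d − 1` with exactly 3 odd parts. -/
def Yv (d : ℕ) : Type :=
  {q : Nat.Partition (2 * d - 1) // Multiset.countP (fun i => Odd i) q.parts = 3}

/-- `μ` is obtained from the even partition `x` by removing one box from each of two
different rows and adding one box to another row (possibly creating a new row of size 1). -/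
def moveRel (d : ℕ) (x : Xv d) (y : Yv d) : Prop :=
  ∃ (a b : ℕ) (s : Multiset ℕ), x.1.parts = a ::ₘ b ::ₘ s ∧
    ((∃ c ∈ s, y.1.parts = (a - 1) ::ₘ (b - 1) ::ₘ (c + 1) ::ₘ s.erase c) ∨
      y.1.parts = (a - 1) ::ₘ (b - 1) ::ₘ 1 ::ₘ s)

/-- The bipartite graph `G_d` on `X_d ⊕ Y_d` with an edge between `2λ` and `μ`
whenever `μ` is obtained from `2λ` by a box move as above. -/
def Gd (d : ℕ) : SimpleGraph (Xv d ⊕ Yv d) where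
  Adj u v :=
    (∃ x y, u = Sum.inl x ∧ v = Sum.inr y ∧ moveRel d x y) ∨
    (∃ x y, u = Sum.inr y ∧ v = Sum.inl x ∧ moveRel d x y)
  symm := by
    constructor
    intro u v h
    rcases h with ⟨x, y, hu, hv, h⟩ | ⟨x, y, hu, hv, h⟩
    · exact Or.inr ⟨x, y, hv, hu, h⟩
    · exact Or.inl ⟨x, y, hv, hu, h⟩
  loopless := by
    constructor
    intro u h
    rcases h with ⟨x, y, hu, hv, _⟩ | ⟨x, y, hu, hv, _⟩ <;> subst hu <;>
      cases hv

/-!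
Every vertex `μ ∈ Y_d` has a neighbour in `X_d`: add a box to two of its three odd rows and
remove one from the third. So it suffices to connect every `x ∈ X_d` to `(2, 2, …, 2)`. If `x`
has a row `a ≥ 4` and another row `w`, then `x` and the partition with `a` split into `a - 2` and
`2` have the common neighbour obtained from `x` by shortening rows `a` and `w` and opening a new
row of length `1`; each such split adds a row, and a partition with all rows `2` is `(2, …, 2)`.
-/

open Multiset

namespace Multiset

lemma countP_odd_eq_zero {s : Multiset ℕ} (hs : ∀ i ∈ s, Even i) : s.countP Odd = 0 :=
  countP_eq_zero.2 fun i hi => Nat.not_odd_iff_even.2 (hs i hi)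

lemma exists_eq_cons_cons_cons_of_countP_eq_three {α : Type*} {p : α → Prop} [DecidablePred p]
    {s : Multiset α} (hs : s.countP p = 3) :
    ∃ a b c e, s = a ::ₘ b ::ₘ c ::ₘ e ∧ p a ∧ p b ∧ p c ∧ ∀ i ∈ e, ¬p i := by
  rw [countP_eq_card_filter, card_eq_three] at hs
  obtain ⟨a, b, c, habc⟩ := hs
  have hp : ∀ i ∈ s.filter p, p i := fun i hi => (mem_filter.1 hi).2
  rw [habc] at hp
  simp only [insert_eq_cons, forall_mem_cons, mem_singleton, forall_eq] at hp
  refine ⟨a, b, c, s.filter (¬p ·), ?_, hp.1, hp.2.1, hp.2.2, fun i hi => (mem_filter.1 hi).2⟩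
  conv_lhs => rw [← filter_add_not p s, habc]
  simp

end Multiset

namespace Xv

variable {d : ℕ}

lemma ext_parts {x x' : Xv d} (h : x.1.parts = x'.1.parts) : x = x' :=
  Subtype.ext (Nat.Partition.ext h)

lemma even_of_mem (x : Xv d) {i : ℕ} (hi : i ∈ x.1.parts) : Even i :=
  x.2.1 i hi

lemma two_le_of_mem (x : Xv d) {i : ℕ} (hi : i ∈ x.1.parts) : 2 ≤ i := by
  have := Nat.even_iff.1 (x.even_of_mem hi)
  have := x.1.parts_pos hi
  omega

lemma card_ne_one (x : Xv d) : card x.1.parts ≠ 1 := by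
  intro h
  obtain ⟨a, ha⟩ := card_eq_one.1 h
  have hsum := x.1.parts_sum
  rw [ha, sum_singleton] at hsum
  exact x.2.2 (hsum ▸ ha)

lemma card_le (x : Xv d) : card x.1.parts ≤ d := by
  have := card_nsmul_le_sum fun _ hi => x.two_le_of_mem hi
  rw [x.1.parts_sum, smul_eq_mul] at this
  omega

lemma exists_parts_eq {s : Multiset ℕ} (hs : ∀ i ∈ s, 0 < i ∧ Even i) (hsum : s.sum = 2 * d)
    (hcard : card s ≠ 1) : ∃ x : Xv d, x.1.parts = s :=
  ⟨⟨⟨s, fun hi => (hs _ hi).1, hsum⟩, fun i hi => (hs i hi).2,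
    fun h => hcard (by rw [show s = {2 * d} from h, card_singleton])⟩, rfl⟩

end Xv

namespace Yv

variable {d : ℕ}

lemma exists_parts_eq {s : Multiset ℕ} (hpos : ∀ i ∈ s, 0 < i) (hsum : s.sum = 2 * d - 1)
    (hodd : s.countP Odd = 3) : ∃ y : Yv d, y.1.parts = s :=
  ⟨⟨⟨s, fun hi => hpos _ hi, hsum⟩, hodd⟩, rfl⟩

end Yv

namespace Gd

variable {d : ℕ}

lemma adj_of_moveRel {x : Xv d} {y : Yv d} (h : moveRel d x y) :
    (Gd d).Adj (.inl x) (.inr y) :=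
  Or.inl ⟨x, y, rfl, rfl, h⟩

lemma reachable_of_moveRel {x x' : Xv d} {y : Yv d} (h : moveRel d x y) (h' : moveRel d x' y) :
    (Gd d).Reachable (.inl x) (.inl x') :=
  (adj_of_moveRel h).reachable.trans (adj_of_moveRel h').reachable.symm

lemma exists_reachable_card_succ {x : Xv d} {a : ℕ} (ha : a ∈ x.1.parts) (ha4 : 4 ≤ a) :
    ∃ x' : Xv d, card x'.1.parts = card x.1.parts + 1 ∧ (Gd d).Reachable (.inl x) (.inl x') := by
  obtain ⟨r, hr⟩ := exists_cons_of_mem ha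
  obtain ⟨w, hw⟩ := exists_mem_of_ne_zero fun h : r = 0 => x.card_ne_one (by simp [hr, h])
  obtain ⟨t, rfl⟩ := exists_cons_of_mem hw
  have hmem : ∀ i ∈ a ::ₘ w ::ₘ t, 2 ≤ i ∧ Even i :=
    fun i hi => ⟨x.two_le_of_mem (hr ▸ hi), x.even_of_mem (hr ▸ hi)⟩
  simp only [forall_mem_cons, Nat.even_iff] at hmem
  obtain ⟨⟨-, ha_even⟩, ⟨hw2, hw_even⟩, ht⟩ := hmem
  have hsum : a + (w + t.sum) = 2 * d := by simpa [hr] using x.1.parts_sum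
  obtain ⟨y, hy⟩ := Yv.exists_parts_eq (d := d) (s := (a - 1) ::ₘ (w - 1) ::ₘ 1 ::ₘ t)
    (by simp only [forall_mem_cons]; grind)
    (by simp only [sum_cons]; omega)
    (by
      rw [countP_cons, countP_cons, countP_cons, countP_odd_eq_zero fun i hi =>
        Nat.even_iff.2 (ht i hi).2]
      simp [Nat.odd_iff, show (a - 1) % 2 = 1 by omega, show (w - 1) % 2 = 1 by omega])
  obtain ⟨x', hx'⟩ := Xv.exists_parts_eq (d := d) (s := 2 ::ₘ w ::ₘ (a - 2) ::ₘ t)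
    (by simp only [forall_mem_cons, Nat.even_iff]; grind)
    (by simp only [sum_cons]; omega)
    (by simp)
  refine ⟨x', by simp [hx', hr], reachable_of_moveRel (y := y) ⟨a, w, t, hr, Or.inr hy⟩
    ⟨2, w, (a - 2) ::ₘ t, hx', Or.inl ⟨a - 2, mem_cons_self _ _, ?_⟩⟩⟩
  rw [hy, erase_cons_head, show a - 2 + 1 = a - 1 by omega, cons_swap (w - 1) 1,
    cons_swap (a - 1) 1, cons_swap (a - 1)]

lemma reachable_of_parts_eq_replicate {x₀ : Xv d} (h₀ : x₀.1.parts = replicate d 2) (x : Xv d) :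
    (Gd d).Reachable (.inl x) (.inl x₀) := by
  by_cases h : ∃ a ∈ x.1.parts, 4 ≤ a
  · obtain ⟨a, ha, ha4⟩ := h
    obtain ⟨x', hcard, hreach⟩ := exists_reachable_card_succ ha ha4
    have := x'.card_le
    exact hreach.trans (reachable_of_parts_eq_replicate h₀ x')
  · push Not at h
    have hx : x.1.parts = replicate (card x.1.parts) 2 := eq_replicate_card.2 fun i hi => by
      have := x.two_le_of_mem hi
      have := Nat.even_iff.1 (x.even_of_mem hi)
      have := h i hi
      omega
    have hcard : card x.1.parts = d := by
      have := x.1.parts_sum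
      rw [hx, sum_replicate, smul_eq_mul] at this
      omega
    rw [Xv.ext_parts (hx.trans (by rw [hcard, h₀]))]
termination_by d - card x.1.parts

end Gd

lemma Yv.exists_moveRel {d : ℕ} (y : Yv d) : ∃ x : Xv d, moveRel d x y := by
  obtain ⟨a, b, c, e, hy, ha, hb, hc, he⟩ := exists_eq_cons_cons_cons_of_countP_eq_three y.2
  have hpos : ∀ i ∈ e, 0 < i := fun i hi => y.1.parts_pos (by simp [hy, hi])
  have hsum : a + (b + (c + e.sum)) = 2 * d - 1 := by simpa [hy] using y.1.parts_sum
  simp only [Nat.not_odd_iff_even, Nat.even_iff] at he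
  rw [Nat.odd_iff] at ha hb hc
  by_cases hc1 : c = 1
  · obtain ⟨x, hx⟩ := Xv.exists_parts_eq (d := d) (s := (a + 1) ::ₘ (b + 1) ::ₘ e)
      (by simp only [forall_mem_cons, Nat.even_iff]; grind)
      (by simp only [sum_cons]; omega)
      (by simp)
    exact ⟨x, a + 1, b + 1, e, hx, Or.inr (by simp [hy, hc1])⟩
  · obtain ⟨x, hx⟩ := Xv.exists_parts_eq (d := d) (s := (a + 1) ::ₘ (b + 1) ::ₘ (c - 1) ::ₘ e)
      (by simp only [forall_mem_cons, Nat.even_iff]; grind)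
      (by simp only [sum_cons]; omega)
      (by simp)
    refine ⟨x, a + 1, b + 1, (c - 1) ::ₘ e, hx, Or.inl ⟨c - 1, mem_cons_self _ _, ?_⟩⟩
    rw [erase_cons_head, Nat.sub_add_cancel (by omega), hy]
    simp

/-- For `d ≥ 2`, the bipartite graph `G_d` is connected. -/
theorem stmt11 (d : ℕ) (hd : 2 ≤ d) : (Gd d).Connected := by
  obtain ⟨x₀, h₀⟩ := Xv.exists_parts_eq (d := d) (s := replicate d 2)
    (fun i hi => eq_of_mem_replicate hi ▸ ⟨two_pos, even_two⟩)
    (by rw [sum_replicate, smul_eq_mul, mul_comm]) (by rw [card_replicate]; omega)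
  have hX (x : Xv d) := Gd.reachable_of_parts_eq_replicate h₀ x
  have hreach : ∀ u, (Gd d).Reachable u (.inl x₀)
    | .inl x => hX x
    | .inr y =>
      let ⟨x, hxy⟩ := y.exists_moveRel
      (Gd.adj_of_moveRel hxy).reachable.symm.trans (hX x)
  have : Nonempty (Xv d ⊕ Yv d) := ⟨.inl x₀⟩
  exact ⟨fun u v => (hreach u).trans (hreach v).symm⟩
end
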